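/- arXiv:1511.04688 — 2 statements merged into one kernel-verified Lean document; each statement's English description precedes it below -/
import Mathlib

section
/- Let n ≥ 1, b ≥ 1 integers, p ≥ 0 an integer, set γ = 1/(2b) and s = p + b + n/2. Let φ ∈ M, and let α ∈ ℤ₊ⁿ be a multi-index and β ∈ ℤ₊ with |α| + 2bβ ≤ p. If ∫₁^∞ dr/(r φ(r)²) < ∞, then ∫_{ℝⁿ}∫_ℝ |ξ^α|² |η|^{2β} / ( r_γ(ξ,η)^{2s} · φ(r_γ(ξ,η))² ) dξ dη < ∞, where r_γ(ξ,η) = (1 + |ξ|² + |η|^{2γ})^{1/2}. -/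
/-!
With `r = r_γ(ξ, η)` one has `|ξᵢ| ≤ r` and `|η|^{1/b} ≤ r²`, so the integrand is at most
`1 / (r^{2b+n} φ(r)²)`, a function of `v = r² = 1 + |ξ|² + |η|^{1/b}`. The substitution
`η = (v - 1 - |ξ|²)^b` turns the `η`-integral into an integral over `v > 1 + |ξ|²` with weight
at most `2b v^{b-1}`. Exchanging the order of integration, the `ξ`-integral becomes the volume of
`{|ξ|² < v}`, at most `(2√v)^n` (the ball lies in a cube). Finally `v = r²` leaves a constant
times `∫₁^∞ dr / (r φ(r)²)`.
-/

open MeasureTheory Filter Set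
open scoped ENNReal

/-- The anisotropic weight r_γ(ξ,η) = (1 + |ξ|² + |η|^{2γ})^{1/2}. -/
noncomputable def rgam (n : ℕ) (γ : ℝ) (q : (Fin n → ℝ) × ℝ) : ℝ :=
  Real.sqrt (1 + (∑ i, (q.1 i) ^ 2) + |q.2| ^ (2 * γ))

lemma lintegral_comp_abs (f : ℝ → ℝ≥0∞) : ∫⁻ x, f |x| = 2 * ∫⁻ x in Ioi 0, f x := by
  have hIio : ∫⁻ x in Iio 0, f |x| = ∫⁻ x in Ioi 0, f x := by
    have := lintegral_image_eq_lintegral_abs_deriv_mul (measurableSet_Ioi (a := (0 : ℝ)))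
      (fun x _ => (hasDerivAt_neg x).hasDerivWithinAt) neg_injective.injOn (fun x => f |x|)
    rw [image_neg_Ioi, neg_zero] at this
    rw [this]
    refine setLIntegral_congr_fun measurableSet_Ioi fun x hx => ?_
    simp [abs_of_pos (mem_Ioi.1 hx)]
  have hIci : ∫⁻ x in Ici 0, f |x| = ∫⁻ x in Ioi 0, f x := by
    rw [← setLIntegral_congr Ioi_ae_eq_Ici]
    exact setLIntegral_congr_fun measurableSet_Ioi fun x hx => by rw [abs_of_pos hx]
  rw [← lintegral_add_compl _ measurableSet_Iio, compl_Iio, hIio, hIci, two_mul]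

lemma setLIntegral_Ioi_comp_add_rpow_inv {b : ℕ} (hb : 0 < b) (A : ℝ) (G : ℝ → ℝ≥0∞) :
    ∫⁻ η in Ioi 0, G (A + η ^ (b : ℝ)⁻¹) =
      ∫⁻ v in Ioi A, ENNReal.ofReal (b * (v - A) ^ (b - 1)) * G v := by
  have hb' : (b : ℝ) ≠ 0 := by positivity
  have himage : (fun v => (v - A) ^ b) '' Ioi A = Ioi 0 := by
    refine Subset.antisymm ?_ fun y (hy : 0 < y) => ⟨A + y ^ (b : ℝ)⁻¹, ?_, ?_⟩
    · rintro _ ⟨v, hv, rfl⟩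
      exact pow_pos (sub_pos.2 (mem_Ioi.1 hv)) b
    · simpa using Real.rpow_pos_of_pos hy _
    · simp [← Real.rpow_natCast, ← Real.rpow_mul hy.le, inv_mul_cancel₀ hb']
  have hderiv : ∀ v ∈ Ioi A,
      HasDerivWithinAt (fun v => (v - A) ^ b) (b * (v - A) ^ (b - 1)) (Ioi A) v :=
    fun v _ => by simpa using (((hasDerivAt_id v).sub_const A).fun_pow b).hasDerivWithinAt
  have hinj : InjOn (fun v => (v - A) ^ b) (Ioi A) := fun v hv w hw h =>
    sub_left_injective ((pow_left_strictMonoOn₀ hb.ne').injOn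
      (sub_pos.2 (mem_Ioi.1 hv)).le (sub_pos.2 (mem_Ioi.1 hw)).le h)
  rw [← himage, lintegral_image_eq_lintegral_abs_deriv_mul measurableSet_Ioi hderiv hinj]
  refine setLIntegral_congr_fun measurableSet_Ioi fun v (hv : A < v) => ?_
  have hvA : 0 < v - A := sub_pos.2 hv
  rw [abs_of_nonneg (by positivity), ← Real.rpow_natCast (v - A) b, ← Real.rpow_mul hvA.le,
    mul_inv_cancel₀ hb', Real.rpow_one, add_sub_cancel]

lemma lintegral_comp_add_abs_rpow_inv_le {b : ℕ} (hb : 0 < b) {A : ℝ} (hA : 0 ≤ A)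
    (G : ℝ → ℝ≥0∞) :
    ∫⁻ η, G (A + |η| ^ (b : ℝ)⁻¹) ≤
      ENNReal.ofReal (2 * b) * ∫⁻ v in Ioi A, ENNReal.ofReal (v ^ (b - 1)) * G v := by
  have hweight : ∀ v ∈ Ioi A, ENNReal.ofReal (b * (v - A) ^ (b - 1)) * G v ≤
      ENNReal.ofReal b * (ENNReal.ofReal (v ^ (b - 1)) * G v) := fun v (hv : A < v) => by
    rw [← mul_assoc, ← ENNReal.ofReal_mul (Nat.cast_nonneg b)]
    gcongr
    linarith
  calc ∫⁻ η, G (A + |η| ^ (b : ℝ)⁻¹)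
      = 2 * ∫⁻ v in Ioi A, ENNReal.ofReal (b * (v - A) ^ (b - 1)) * G v := by
        rw [lintegral_comp_abs (fun η => G (A + η ^ (b : ℝ)⁻¹)),
          setLIntegral_Ioi_comp_add_rpow_inv hb]
    _ ≤ 2 * ∫⁻ v in Ioi A, ENNReal.ofReal b * (ENNReal.ofReal (v ^ (b - 1)) * G v) := by
        gcongr 2 * ?_
        exact setLIntegral_mono' measurableSet_Ioi hweight
    _ = _ := by
        rw [lintegral_const_mul' _ _ ENNReal.ofReal_ne_top, ← mul_assoc,
          ENNReal.ofReal_mul zero_le_two, ENNReal.ofReal_ofNat]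

lemma lintegral_setLIntegral_Ioi_eq {X : Type*} [MeasurableSpace X] (μ : Measure X) [SFinite μ]
    {f : X → ℝ} (hf : Measurable f) {H : ℝ → ℝ≥0∞} (hH : Measurable H) :
    ∫⁻ x, (∫⁻ v in Ioi (f x), H v) ∂μ = ∫⁻ v, H v * μ {x | f x < v} := by
  have hS : MeasurableSet {p : X × ℝ | f p.1 < p.2} :=
    measurableSet_lt (hf.comp measurable_fst) measurable_snd
  calc ∫⁻ x, (∫⁻ v in Ioi (f x), H v) ∂μ
      = ∫⁻ x, (∫⁻ v, {p : X × ℝ | f p.1 < p.2}.indicator (fun p => H p.2) (x, v)) ∂μ := by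
        congr! 2 with x
        rw [← lintegral_indicator measurableSet_Ioi]
        rfl
    _ = ∫⁻ v, ∫⁻ x, {p : X × ℝ | f p.1 < p.2}.indicator (fun p => H p.2) (x, v) ∂μ :=
        lintegral_lintegral_swap (f := fun x v => {p : X × ℝ | f p.1 < p.2}.indicator
          (fun p => H p.2) (x, v)) ((hH.comp measurable_snd).indicator hS).aemeasurable
    _ = ∫⁻ v, H v * μ {x | f x < v} := by
        congr! 2 with v
        rw [← lintegral_indicator_const (measurableSet_lt hf measurable_const)]
        rfl

lemma volume_sum_sq_lt_le (n : ℕ) (v : ℝ) :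
    volume {ξ : Fin n → ℝ | ∑ i, ξ i ^ 2 < v} ≤ ENNReal.ofReal ((2 * √v) ^ n) := by
  have hcube : {ξ : Fin n → ℝ | ∑ i, ξ i ^ 2 < v} ⊆ univ.pi fun _ => Icc (-√v) √v :=
    fun ξ (hξ : _ < v) i _ => abs_le.1 <| Real.abs_le_sqrt <|
      (Finset.single_le_sum (fun j _ => sq_nonneg (ξ j)) (Finset.mem_univ i)).trans hξ.le
  refine (measure_mono hcube).trans_eq ?_
  rw [volume_pi_pi, Finset.prod_const, Finset.card_univ, Fintype.card_fin, Real.volume_Icc,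
    sub_neg_eq_add, ← ENNReal.ofReal_pow (by positivity)]
  ring_nf

lemma lintegral_comp_one_add_sum_sq_add_abs_rpow_inv_le (n : ℕ) {b : ℕ} (hb : 0 < b)
    {G : ℝ → ℝ≥0∞} (hG : Measurable G) :
    ∫⁻ q : (Fin n → ℝ) × ℝ, G (1 + ∑ i, q.1 i ^ 2 + |q.2| ^ (b : ℝ)⁻¹) ≤
      ENNReal.ofReal (2 * b) *
        ∫⁻ v in Ioi 1, ENNReal.ofReal (v ^ (b - 1) * (2 * √v) ^ n) * G v := by
  set H : ℝ → ℝ≥0∞ := fun v => ENNReal.ofReal (v ^ (b - 1)) * G v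
  have hS : Measurable fun ξ : Fin n → ℝ => 1 + ∑ i, ξ i ^ 2 := by fun_prop
  have hlayer : ∀ v, H v * volume {ξ : Fin n → ℝ | 1 + ∑ i, ξ i ^ 2 < v} ≤
      (Ioi 1).indicator (fun v => ENNReal.ofReal (v ^ (b - 1) * (2 * √v) ^ n) * G v) v := by
    intro v
    by_cases hv : 1 < v
    · have hsub : {ξ : Fin n → ℝ | 1 + ∑ i, ξ i ^ 2 < v} ⊆ {ξ | ∑ i, ξ i ^ 2 < v} :=
        fun ξ (hξ : _ < v) => show _ < v by linarith
      rw [indicator_of_mem (mem_Ioi.2 hv), ENNReal.ofReal_mul (by positivity), mul_right_comm]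
      gcongr
      exact (measure_mono hsub).trans (volume_sum_sq_lt_le n v)
    · have hempty : {ξ : Fin n → ℝ | 1 + ∑ i, ξ i ^ 2 < v} = ∅ :=
        eq_empty_of_forall_notMem fun ξ (hξ : _ < v) =>
          hv (lt_of_le_of_lt (le_add_of_nonneg_right (by positivity)) hξ)
      simp [hempty]
  calc ∫⁻ q : (Fin n → ℝ) × ℝ, G (1 + ∑ i, q.1 i ^ 2 + |q.2| ^ (b : ℝ)⁻¹)
      = ∫⁻ ξ : Fin n → ℝ, ∫⁻ η, G (1 + ∑ i, ξ i ^ 2 + |η| ^ (b : ℝ)⁻¹) := by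
        rw [Measure.volume_eq_prod, lintegral_prod _ (by fun_prop)]
    _ ≤ ∫⁻ ξ : Fin n → ℝ, ENNReal.ofReal (2 * b) * ∫⁻ v in Ioi (1 + ∑ i, ξ i ^ 2), H v :=
        lintegral_mono fun ξ => lintegral_comp_add_abs_rpow_inv_le hb (by positivity) G
    _ = ENNReal.ofReal (2 * b) *
          ∫⁻ v, H v * volume {ξ : Fin n → ℝ | 1 + ∑ i, ξ i ^ 2 < v} := by
        rw [lintegral_const_mul' _ _ ENNReal.ofReal_ne_top,
          lintegral_setLIntegral_Ioi_eq _ hS (by fun_prop)]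
    _ ≤ _ := by
        rw [← lintegral_indicator measurableSet_Ioi]
        gcongr with v
        exact hlayer v

lemma setLIntegral_Ioi_one_eq_comp_sq (F : ℝ → ℝ≥0∞) :
    ∫⁻ v in Ioi 1, F v = ∫⁻ r in Ioi 1, ENNReal.ofReal (2 * r) * F (r ^ 2) := by
  have himage : (fun r : ℝ => r ^ 2) '' Ioi 1 = Ioi 1 := by
    refine Subset.antisymm ?_ fun v (hv : 1 < v) => ⟨√v, ?_, Real.sq_sqrt (by linarith)⟩
    · rintro _ ⟨r, hr, rfl⟩
      exact one_lt_pow₀ (mem_Ioi.1 hr) two_ne_zero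
    · simpa using Real.sqrt_lt_sqrt zero_le_one hv
  have hderiv : ∀ r ∈ Ioi (1 : ℝ), HasDerivWithinAt (fun r : ℝ => r ^ 2) (2 * r) (Ioi 1) r :=
    fun r _ => by simpa using (hasDerivAt_pow 2 r).hasDerivWithinAt
  have hinj : InjOn (fun r : ℝ => r ^ 2) (Ioi 1) :=
    (pow_left_strictMonoOn₀ two_ne_zero).injOn.mono fun r (hr : 1 < r) =>
      (zero_lt_one.trans hr).le
  conv_lhs => rw [← himage]
  rw [lintegral_image_eq_lintegral_abs_deriv_mul measurableSet_Ioi hderiv hinj]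
  refine setLIntegral_congr_fun measurableSet_Ioi fun r (hr : 1 < r) => ?_
  rw [abs_of_pos (by linarith)]

lemma prod_abs_pow_sq_mul_abs_pow_le {n b p β : ℕ} {α : Fin n → ℕ} (hb : 0 < b)
    (hdeg : ∑ i, α i + 2 * b * β ≤ p) {ξ : Fin n → ℝ} {η r : ℝ} (hr : 1 ≤ r)
    (hξ : ∀ i, |ξ i| ≤ r) (hη : |η| ^ (b : ℝ)⁻¹ ≤ r ^ 2) :
    (∏ i, |ξ i| ^ α i) ^ 2 * |η| ^ (2 * β) ≤ r ^ (2 * p) := by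
  have hprod : ∏ i, |ξ i| ^ α i ≤ r ^ ∑ i, α i := by
    rw [← Finset.prod_pow_eq_pow_sum]
    exact Finset.prod_le_prod (fun i _ => by positivity)
      fun i _ => pow_le_pow_left₀ (abs_nonneg _) (hξ i) _
  have hη' : |η| ^ (2 * β) = (|η| ^ (b : ℝ)⁻¹) ^ (2 * b * β) := by
    rw [← Real.rpow_natCast _ (2 * b * β), ← Real.rpow_mul (abs_nonneg η),
      ← Real.rpow_natCast]
    congr 1
    push_cast
    field_simp
  calc (∏ i, |ξ i| ^ α i) ^ 2 * |η| ^ (2 * β)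
      ≤ (r ^ ∑ i, α i) ^ 2 * (r ^ 2) ^ (2 * b * β) := by
        rw [hη']
        gcongr
    _ = r ^ (2 * (∑ i, α i + 2 * b * β)) := by ring
    _ ≤ r ^ (2 * p) := pow_le_pow_right₀ hr (by omega)

section rgam

variable {n : ℕ} {γ : ℝ} (q : (Fin n → ℝ) × ℝ)

lemma one_le_rgam : 1 ≤ rgam n γ q :=
  Real.one_le_sqrt.2 <| by
    have : 0 ≤ ∑ i, q.1 i ^ 2 := by positivity
    have : 0 ≤ |q.2| ^ (2 * γ) := by positivity
    linarith

lemma rgam_sq : rgam n γ q ^ 2 = 1 + ∑ i, q.1 i ^ 2 + |q.2| ^ (2 * γ) :=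
  Real.sq_sqrt <| by positivity

lemma abs_fst_le_rgam (i : Fin n) : |q.1 i| ≤ rgam n γ q := by
  refine Real.abs_le_sqrt ?_
  have := Finset.single_le_sum (fun j _ => sq_nonneg (q.1 j)) (Finset.mem_univ i)
  have : 0 ≤ |q.2| ^ (2 * γ) := by positivity
  linarith

lemma abs_snd_rpow_le_rgam_sq : |q.2| ^ (2 * γ) ≤ rgam n γ q ^ 2 := by
  rw [rgam_sq]
  have : 0 ≤ ∑ i, q.1 i ^ 2 := by positivity
  linarith

end rgam

lemma monomial_div_rgam_le {n b p β : ℕ} {α : Fin n → ℕ} {γ s : ℝ} (hb : 0 < b)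
    (hγ : 2 * γ = (b : ℝ)⁻¹) (hs : s = p + b + n / 2) (hdeg : ∑ i, α i + 2 * b * β ≤ p)
    (φ : ℝ → ℝ) (q : (Fin n → ℝ) × ℝ) :
    (∏ i, |q.1 i| ^ α i) ^ 2 * |q.2| ^ (2 * β) / (rgam n γ q ^ (2 * s) * φ (rgam n γ q) ^ 2) ≤
      1 / (rgam n γ q ^ (2 * b + n) * φ (rgam n γ q) ^ 2) := by
  set r := rgam n γ q
  have hr : 1 ≤ r := one_le_rgam q
  have hnum : (∏ i, |q.1 i| ^ α i) ^ 2 * |q.2| ^ (2 * β) ≤ r ^ (2 * p) :=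
    prod_abs_pow_sq_mul_abs_pow_le hb hdeg hr (abs_fst_le_rgam q)
      (hγ ▸ abs_snd_rpow_le_rgam_sq q)
  have hpow : r ^ (2 * s) = r ^ (2 * p) * r ^ (2 * b + n) := by
    rw [← pow_add, ← Real.rpow_natCast, hs]
    push_cast
    ring_nf
  calc _ ≤ r ^ (2 * p) / (r ^ (2 * s) * φ r ^ 2) := by gcongr
    _ = 1 / (r ^ (2 * b + n) * φ r ^ 2) := by
        rw [hpow, mul_assoc, div_mul_cancel_left₀ (by positivity), one_div]

lemma lintegral_rgam_lt_top (n : ℕ) {b : ℕ} (hb : 0 < b) {γ : ℝ} (hγ : 2 * γ = (b : ℝ)⁻¹)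
    {φ : ℝ → ℝ} (hφ : Measurable φ)
    (hint : IntegrableOn (fun r : ℝ => 1 / (r * φ r ^ 2)) (Ici 1)) :
    ∫⁻ q, ENNReal.ofReal (1 / (rgam n γ q ^ (2 * b + n) * φ (rgam n γ q) ^ 2)) < ∞ := by
  set g : ℝ → ℝ := fun r => 1 / (r ^ (2 * b + n) * φ r ^ 2)
  have hradial : ∀ r ∈ Ioi (1 : ℝ), ENNReal.ofReal (2 * r) *
      (ENNReal.ofReal ((r ^ 2) ^ (b - 1) * (2 * √(r ^ 2)) ^ n) * ENNReal.ofReal (g √(r ^ 2))) =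
      ENNReal.ofReal (2 ^ (n + 1)) * ENNReal.ofReal (1 / (r * φ r ^ 2)) := by
    intro r (hr : 1 < r)
    have hr0 : 0 < r := zero_lt_one.trans hr
    rw [Real.sqrt_sq hr0.le, ← ENNReal.ofReal_mul (by positivity),
      ← ENNReal.ofReal_mul (by positivity), ← ENNReal.ofReal_mul (by positivity)]
    congr 1
    obtain ⟨k, rfl⟩ : ∃ k, b = k + 1 := ⟨b - 1, by omega⟩
    simp only [g, Nat.add_sub_cancel]
    field_simp
    ring
  calc ∫⁻ q, ENNReal.ofReal (g (rgam n γ q))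
      ≤ ENNReal.ofReal (2 * b) * ∫⁻ v in Ioi 1,
          ENNReal.ofReal (v ^ (b - 1) * (2 * √v) ^ n) * ENNReal.ofReal (g √v) := by
        simp only [rgam, hγ]
        exact lintegral_comp_one_add_sum_sq_add_abs_rpow_inv_le n hb (by fun_prop)
    _ = ENNReal.ofReal (2 * b) * (ENNReal.ofReal (2 ^ (n + 1)) *
          ∫⁻ r in Ioi 1, ENNReal.ofReal (1 / (r * φ r ^ 2))) := by
        rw [setLIntegral_Ioi_one_eq_comp_sq, setLIntegral_congr_fun measurableSet_Ioi hradial,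
          lintegral_const_mul' _ _ ENNReal.ofReal_ne_top]
    _ < ∞ := ENNReal.mul_lt_top ENNReal.ofReal_lt_top <| ENNReal.mul_lt_top ENNReal.ofReal_lt_top
        (hint.mono_set Ioi_subset_Ici_self).lintegral_lt_top

theorem stmt_13_general (n b p : ℕ) (hb : 1 ≤ b)
    (γ s : ℝ) (hγ : γ = 1 / (2 * (b : ℝ))) (hs : s = (p : ℝ) + b + n / 2)
    (φ : ℝ → ℝ) (hmeas : Measurable φ)
    (α : Fin n → ℕ) (β : ℕ) (hdeg : (∑ i, α i) + 2 * b * β ≤ p)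
    (hint : IntegrableOn (fun r : ℝ => 1 / (r * (φ r) ^ 2)) (Ici 1)) :
    Integrable (fun q : (Fin n → ℝ) × ℝ =>
      (∏ i, |q.1 i| ^ (α i)) ^ 2 * |q.2| ^ (2 * β) /
        ((rgam n γ q) ^ (2 * s) * (φ (rgam n γ q)) ^ 2)) := by
  have h2γ : 2 * γ = (b : ℝ)⁻¹ := by rw [hγ]; field_simp
  have hrgam : Measurable (rgam n γ) := by unfold rgam; fun_prop
  have hnonneg : ∀ q, 0 ≤ (∏ i, |q.1 i| ^ (α i)) ^ 2 * |q.2| ^ (2 * β) /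
      ((rgam n γ q) ^ (2 * s) * (φ (rgam n γ q)) ^ 2) := fun q => by
    have := one_le_rgam (γ := γ) q
    positivity
  refine ⟨(by fun_prop : Measurable _).aestronglyMeasurable,
    (hasFiniteIntegral_iff_ofReal (ae_of_all _ hnonneg)).2 ?_⟩
  exact (lintegral_mono fun q => ENNReal.ofReal_le_ofReal
    (monomial_div_rgam_le hb h2γ hs hdeg φ q)).trans_lt
      (lintegral_rgam_lt_top n hb h2γ hmeas hint)

/-- If ∫₁^∞ dr/(r φ(r)²) < ∞ then
    ∫∫ |ξ^α|² |η|^{2β} / (r_γ^{2s} φ(r_γ)²) dξ dη < ∞,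
    where γ = 1/(2b), s = p + b + n/2 and |α| + 2bβ ≤ p. -/
theorem stmt_13 (n b p : ℕ) (hn : 1 ≤ n) (hb : 1 ≤ b)
    (γ s : ℝ) (hγ : γ = 1 / (2 * (b : ℝ))) (hs : s = (p : ℝ) + b + n / 2)
    (φ : ℝ → ℝ) (hmeas : Measurable φ)
    (hpos : ∀ r : ℝ, 1 ≤ r → 0 < φ r)
    (hslow : ∀ l : ℝ, 0 < l →
      Tendsto (fun r : ℝ => φ (l * r) / φ r) atTop (nhds 1))
    (hbdd : ∀ c : ℝ, 1 < c → ∃ M : ℝ, ∀ r ∈ Icc (1 : ℝ) c, φ r ≤ M ∧ (φ r)⁻¹ ≤ M)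
    (α : Fin n → ℕ) (β : ℕ) (hdeg : (∑ i, α i) + 2 * b * β ≤ p)
    (hint : IntegrableOn (fun r : ℝ => 1 / (r * (φ r) ^ 2)) (Ici 1)) :
    Integrable (fun q : (Fin n → ℝ) × ℝ =>
      (∏ i, |q.1 i| ^ (α i)) ^ 2 * |q.2| ^ (2 * β) /
        ((rgam n γ q) ^ (2 * s) * (φ (rgam n γ q)) ^ 2)) :=
  stmt_13_general n b p hb γ s hγ hs φ hmeas α β hdeg hint
end

section
/- Let θ ∈ (0,1) and let ψ : (0,∞) → (0,∞) be Borel measurable, regularly varying of index θ at infinity, and bounded together with 1/ψ on compact subintervals of (0,∞). Then ψ is pseudoconcave in a neighbourhood of infinity: there exist r₀ > 0 and a concave positive function ψ₁ : (r₀,∞) → (0,∞) such that both ψ/ψ₁ and ψ₁/ψ are bounded on (r₀,∞). -/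
/-!
Write φ = log ∘ ψ ∘ exp, so that regular variation says φ (x + s) - φ x → θ s for every s.
Since φ is measurable, Egorov's theorem makes this convergence uniform for s ∈ [0, 1]: the
exceptional sets are small, so for every t ∈ [0, 1] some s ∈ [0, 1] avoids them together
with t - s, and φ (x + t) - φ x splits at x + t - s into two uniformly controlled increments.
Chaining unit steps gives Potter's bounds ψ t / ψ s ≤ e^ε (t / s) ^ (θ + ε) and
ψ s / ψ t ≤ e^ε (s / t) ^ (θ - ε) for R ≤ s ≤ t.

The function ψ₁ r = ∫_{t > R} min r t ψ t / t² is concave, as an average of the concave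
functions r ↦ min r t. Splitting the integral at t = r and inserting Potter's bounds with
exponents θ ± ε ∈ (0, 1) shows that ψ₁ / ψ and ψ / ψ₁ are bounded on (R, ∞).
-/

open Filter Set MeasureTheory Topology Real

section UniformConvergence

variable {φ : ℝ → ℝ} {θ : ℝ}

theorem exists_mem_Icc_notMem_and_sub_notMem {A B : Set ℝ} (h : volume A + volume B < 1)
    (t : ℝ) : ∃ s ∈ Icc (0 : ℝ) 1, s ∉ A ∧ t - s ∉ B := by
  by_contra! hcover
  have hsub : Icc (0 : ℝ) 1 ⊆ A ∪ Neg.neg ⁻¹' ((t + ·) ⁻¹' B) := fun s hs ↦ by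
    by_cases hA : s ∈ A
    · exact Or.inl hA
    · exact Or.inr (by simpa [sub_eq_add_neg] using hcover s hs hA)
  have := (measure_mono (μ := volume) hsub).trans (measure_union_le _ _)
  rw [Measure.measure_preimage_neg, measure_preimage_add, Real.volume_Icc, sub_zero,
    ENNReal.ofReal_one] at this
  exact (this.trans_lt h).false

theorem exists_volume_le_tendstoUniformlyOn_Icc {f : ℕ → ℝ → ℝ} {g : ℝ → ℝ}
    (hf : ∀ n, Measurable (f n)) (hg : Measurable g)
    (hfg : ∀ s, Tendsto (f · s) atTop (𝓝 (g s))) {δ : ℝ} (hδ : 0 < δ) :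
    ∃ E, volume E ≤ ENNReal.ofReal δ ∧ TendstoUniformlyOn f g atTop (Icc (-1) 1 \ E) := by
  obtain ⟨E, -, -, hE, hunif⟩ := tendstoUniformlyOn_of_ae_tendsto
    (fun n ↦ (hf n).stronglyMeasurable) hg.stronglyMeasurable measurableSet_Icc
    (measure_Icc_lt_top (μ := volume)).ne (ae_of_all _ fun s _ ↦ hfg s) hδ
  exact ⟨E, hE, hunif⟩

theorem tendsto_sub_sub_mul_of_measurable (hφ : Measurable φ)
    (hconv : ∀ s, Tendsto (fun x ↦ φ (x + s) - φ x) atTop (𝓝 (θ * s)))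
    {x t : ℕ → ℝ} (hx : Tendsto x atTop atTop) (ht : ∀ n, t n ∈ Icc (0 : ℝ) 1) :
    Tendsto (fun n ↦ φ (x n + t n) - φ (x n) - θ * t n) atTop (𝓝 0) := by
  have hxt (s : ℝ) : Tendsto (fun n ↦ x n + t n - s) atTop atTop :=
    tendsto_atTop_mono (fun n ↦ by linarith [(ht n).1]) (tendsto_atTop_add_const_right _ (-s) hx)
  obtain ⟨E₁, hE₁, hunif₁⟩ := exists_volume_le_tendstoUniformlyOn_Icc
    (f := fun n s ↦ φ (x n + s) - φ (x n)) (by fun_prop) (by fun_prop)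
    (fun s ↦ (hconv s).comp hx) (by norm_num : (0 : ℝ) < 1 / 3)
  obtain ⟨E₂, hE₂, hunif₂⟩ := exists_volume_le_tendstoUniformlyOn_Icc
    (f := fun n s ↦ φ (x n + t n) - φ (x n + t n - s)) (by fun_prop) (by fun_prop)
    (fun s ↦ ((hconv s).comp (hxt s)).congr fun n ↦ by simp) (by norm_num : (0 : ℝ) < 1 / 3)
  have hvol : volume E₂ + volume E₁ < 1 := by
    calc volume E₂ + volume E₁ ≤ ENNReal.ofReal (1 / 3) + ENNReal.ofReal (1 / 3) :=
          add_le_add hE₂ hE₁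
      _ < 1 := by rw [← ENNReal.ofReal_add (by norm_num) (by norm_num)]; norm_num
  rw [Metric.tendsto_atTop]
  intro ε hε
  obtain ⟨N, hN⟩ := eventually_atTop.1 ((Metric.tendstoUniformlyOn_iff.1 hunif₁ (ε / 2)
    (half_pos hε)).and (Metric.tendstoUniformlyOn_iff.1 hunif₂ (ε / 2) (half_pos hε)))
  refine ⟨N, fun n hn ↦ ?_⟩
  obtain ⟨s, hs, hsE₂, hsE₁⟩ := exists_mem_Icc_notMem_and_sub_notMem hvol (t n)
  have h₁ := (hN n hn).1 (t n - s)
    ⟨⟨by linarith [hs.2, (ht n).1], by linarith [hs.1, (ht n).2]⟩, hsE₁⟩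
  have h₂ := (hN n hn).2 s ⟨⟨by linarith [hs.1], hs.2⟩, hsE₂⟩
  rw [Real.dist_eq] at h₁ h₂ ⊢
  calc |φ (x n + t n) - φ (x n) - θ * t n - 0|
      = |(θ * (t n - s) - (φ (x n + (t n - s)) - φ (x n)))
          + (θ * s - (φ (x n + t n) - φ (x n + t n - s)))| := by
        rw [← abs_neg]; ring_nf
    _ ≤ _ := abs_add_le _ _
    _ < ε / 2 + ε / 2 := add_lt_add h₁ h₂
    _ = ε := add_halves ε

theorem eventually_forall_Icc_abs_sub_sub_mul_le (hφ : Measurable φ)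
    (hconv : ∀ s, Tendsto (fun x ↦ φ (x + s) - φ x) atTop (𝓝 (θ * s)))
    {ε : ℝ} (hε : 0 < ε) :
    ∀ᶠ x in atTop, ∀ t ∈ Icc (0 : ℝ) 1, |φ (x + t) - φ x - θ * t| ≤ ε := by
  by_contra h
  simp only [not_eventually, frequently_atTop, not_forall, not_le] at h
  choose x hx t ht hgt using fun n : ℕ ↦ h n
  obtain ⟨n, hn⟩ := ((tendsto_sub_sub_mul_of_measurable hφ hconv
    (tendsto_atTop_mono hx tendsto_natCast_atTop_atTop) ht).eventually
    (Metric.ball_mem_nhds 0 hε)).exists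
  rw [Real.dist_eq, sub_zero] at hn
  exact (hgt n).not_gt hn

theorem abs_sub_sub_mul_le_of_forall_Icc {ε X : ℝ} (hε : 0 ≤ ε)
    (H : ∀ x ≥ X, ∀ t ∈ Icc (0 : ℝ) 1, |φ (x + t) - φ x - θ * t| ≤ ε) :
    ∀ x ≥ X, ∀ t ≥ 0, |φ (x + t) - φ x - θ * t| ≤ ε * (t + 1) := by
  have hnat (n : ℕ) :
      ∀ x ≥ X, ∀ t ∈ Icc (0 : ℝ) (n + 1), |φ (x + t) - φ x - θ * t| ≤ ε * (n + 1) := by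
    induction n with
    | zero => simpa using H
    | succ n ih =>
      rintro x hx t ⟨ht₀, htn⟩
      push_cast at htn ⊢
      rcases le_total t 1 with ht1 | ht1
      · nlinarith [H x hx t ⟨ht₀, ht1⟩, n.cast_nonneg (α := ℝ)]
      · calc |φ (x + t) - φ x - θ * t|
            = |(φ (x + 1 + (t - 1)) - φ (x + 1) - θ * (t - 1))
                + (φ (x + 1) - φ x - θ * 1)| := by ring_nf
          _ ≤ ε * (n + 1) + ε :=
              (abs_add_le _ _).trans (add_le_add
                (ih (x + 1) (by linarith) (t - 1) ⟨by linarith, by linarith⟩)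
                (H x hx 1 ⟨zero_le_one, le_rfl⟩))
          _ = ε * (n + 1 + 1) := by ring
  intro x hx t ht
  calc |φ (x + t) - φ x - θ * t| ≤ ε * (⌊t⌋₊ + 1) :=
        hnat ⌊t⌋₊ x hx t ⟨ht, (Nat.lt_floor_add_one t).le⟩
    _ ≤ ε * (t + 1) := by gcongr; exact Nat.floor_le ht

end UniformConvergence

section Potter

variable {ψ : ℝ → ℝ} {θ : ℝ}

theorem tendsto_log_comp_exp_add_sub (hpos : ∀ r, 0 < r → 0 < ψ r)
    (hreg : ∀ l, 0 < l → Tendsto (fun r ↦ ψ (l * r) / ψ r) atTop (𝓝 (l ^ θ))) (s : ℝ) :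
    Tendsto (fun x ↦ log (ψ (exp (x + s))) - log (ψ (exp x))) atTop (𝓝 (θ * s)) := by
  have hlim := ((continuousAt_log (rpow_pos_of_pos (exp_pos s) θ).ne').tendsto.comp
    ((hreg _ (exp_pos s)).comp tendsto_exp_atTop))
  rw [log_rpow (exp_pos s), log_exp] at hlim
  refine hlim.congr fun x ↦ ?_
  simp only [Function.comp, exp_add, mul_comm (exp x)]
  exact log_div (hpos _ (by positivity)).ne' (hpos _ (exp_pos x)).ne'

theorem potter_bounds (hmeas : Measurable ψ) (hpos : ∀ r, 0 < r → 0 < ψ r)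
    (hreg : ∀ l, 0 < l → Tendsto (fun r ↦ ψ (l * r) / ψ r) atTop (𝓝 (l ^ θ)))
    {ε : ℝ} (hε : 0 < ε) :
    ∃ R > 0, ∀ s t, R ≤ s → s ≤ t →
      ψ t ≤ exp ε * ψ s * (t / s) ^ (θ + ε) ∧ ψ s * (t / s) ^ (θ - ε) ≤ exp ε * ψ t := by
  obtain ⟨X, hX⟩ := eventually_atTop.1 (eventually_forall_Icc_abs_sub_sub_mul_le
    (φ := fun x ↦ log (ψ (exp x))) (by fun_prop) (tendsto_log_comp_exp_add_sub hpos hreg) hε)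
  refine ⟨exp X, exp_pos X, fun s t hs hst ↦ ?_⟩
  have hs₀ : 0 < s := (exp_pos X).trans_le hs
  have ht₀ : 0 < t := hs₀.trans_le hst
  set L := log (t / s)
  have hLst : L = log t - log s := log_div ht₀.ne' hs₀.ne'
  have hL : 0 ≤ L := log_nonneg ((one_le_div hs₀).2 hst)
  have hlog : |log (ψ t) - log (ψ s) - θ * L| ≤ ε * (L + 1) := by
    have := abs_sub_sub_mul_le_of_forall_Icc (φ := fun x ↦ log (ψ (exp x))) hε.le hX
      (log s) ((le_log_iff_exp_le hs₀).2 hs) L hL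
    rwa [show log s + L = log t by rw [hLst]; ring, exp_log ht₀, exp_log hs₀] at this
  have hrpow (a : ℝ) : (t / s) ^ a = exp (a * L) := by
    rw [rpow_def_of_pos (div_pos ht₀ hs₀), mul_comm]
  obtain ⟨hlow, hup⟩ := abs_le.1 hlog
  constructor
  · calc ψ t = exp (log (ψ t)) := (exp_log (hpos t ht₀)).symm
      _ ≤ exp (ε + log (ψ s) + (θ + ε) * L) := exp_le_exp.2 (by linarith)
      _ = exp ε * ψ s * (t / s) ^ (θ + ε) := by
        rw [exp_add, exp_add, exp_log (hpos s hs₀), hrpow]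
  · calc ψ s * (t / s) ^ (θ - ε) = exp (log (ψ s) + (θ - ε) * L) := by
          rw [exp_add, exp_log (hpos s hs₀), hrpow]
      _ ≤ exp (ε + log (ψ t)) := exp_le_exp.2 (by linarith)
      _ = exp ε * ψ t := by rw [exp_add, exp_log (hpos t ht₀)]

end Potter

theorem ConcaveOn.integral {E α : Type*} [AddCommGroup E] [Module ℝ E] [MeasurableSpace α]
    {μ : Measure α} {s : Set E} {f : E → α → ℝ} (hs : Convex ℝ s)
    (hf : ∀ᵐ a ∂μ, ConcaveOn ℝ s (f · a)) (hint : ∀ x ∈ s, Integrable (f x) μ) :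
    ConcaveOn ℝ s (fun x ↦ ∫ a, f x a ∂μ) := by
  refine ⟨hs, fun x hx y hy a b ha hb hab ↦ ?_⟩
  simp only [smul_eq_mul]
  rw [← integral_const_mul, ← integral_const_mul,
    ← integral_add ((hint x hx).const_mul a) ((hint y hy).const_mul b)]
  refine integral_mono_ae (((hint x hx).const_mul a).add ((hint y hy).const_mul b))
    (hint _ (hs hx hy ha hb hab)) ?_
  filter_upwards [hf] with t ht using ht.2 hx hy ha hb hab

theorem rpow_div_div_sq_eq {a r t : ℝ} (hr : 0 < r) (ht : 0 < t) :
    (t / r) ^ a / t ^ 2 = (r ^ a)⁻¹ * t ^ (a - 2) := by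
  rw [div_rpow ht.le hr.le, rpow_sub ht, rpow_two]
  field_simp

theorem integrableOn_rpow_div_div_sq {a r : ℝ} (ha : a < 1) (hr : 0 < r) :
    IntegrableOn (fun t ↦ (t / r) ^ a / t ^ 2) (Ioi r) := by
  refine IntegrableOn.congr_fun ?_ (fun t ht ↦ (rpow_div_div_sq_eq hr (hr.trans ht)).symm)
    measurableSet_Ioi
  exact (integrableOn_Ioi_rpow_of_lt (by linarith) hr).const_mul _

theorem mul_integral_rpow_div_div_sq {a r : ℝ} (ha : a < 1) (hr : 0 < r) :
    r * ∫ t in Ioi r, (t / r) ^ a / t ^ 2 = 1 / (1 - a) := by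
  rw [setIntegral_congr_fun measurableSet_Ioi (fun t ht ↦ rpow_div_div_sq_eq hr (hr.trans ht)),
    integral_const_mul, integral_Ioi_rpow_of_lt (by linarith) hr,
    show a - 2 + 1 = a - 1 by ring, rpow_sub_one hr.ne']
  have : 1 - a ≠ 0 := by linarith
  have : a - 1 ≠ 0 := by linarith
  field_simp
  ring

theorem rpow_div_div_eq {a r t : ℝ} (hr : 0 < r) (ht : 0 < t) :
    (t / r) ^ a / t = (r ^ a)⁻¹ * t ^ (a - 1) := by
  rw [div_rpow ht.le hr.le, rpow_sub_one ht.ne']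
  field_simp

theorem integrableOn_rpow_div_div {a R r : ℝ} (hR : 0 < R) (hRr : R ≤ r) :
    IntegrableOn (fun t ↦ (t / r) ^ a / t) (Ioc R r) := by
  refine (ContinuousOn.integrableOn_Icc ?_).mono_set Ioc_subset_Icc_self
  have ht₀ : ∀ t ∈ Icc R r, 0 < t := fun t ht ↦ hR.trans_le ht.1
  exact ((continuousOn_id.div_const r).rpow_const fun t ht ↦
    Or.inl (div_pos (ht₀ t ht) (hR.trans_le hRr)).ne').div continuousOn_id
    fun t ht ↦ (ht₀ t ht).ne'

theorem integral_rpow_div_div_le {a R r : ℝ} (ha : 0 < a) (hR : 0 < R) (hRr : R ≤ r) :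
    ∫ t in Ioc R r, (t / r) ^ a / t ≤ 1 / a := by
  have hr : 0 < r := hR.trans_le hRr
  rw [setIntegral_congr_fun measurableSet_Ioc (fun t ht ↦ rpow_div_div_eq hr (hR.trans ht.1)),
    integral_const_mul, ← intervalIntegral.integral_of_le hRr,
    integral_rpow (Or.inl (by linarith)), sub_add_cancel]
  have : 0 < r ^ a := rpow_pos_of_pos hr a
  have : 0 ≤ R ^ a := rpow_nonneg hR.le a
  rw [inv_mul_le_iff₀ (by positivity), mul_one_div]
  gcongr
  linarith

noncomputable def minKernelIntegral (ψ : ℝ → ℝ) (R r : ℝ) : ℝ :=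
  ∫ t in Ioi R, min r t * (ψ t / t ^ 2)

section MinKernelIntegral

variable {ψ : ℝ → ℝ} {R C p q : ℝ} (hR : 0 < R) (hmeas : Measurable ψ)
  (hpos : ∀ t, 0 < t → 0 < ψ t)
  (hup : ∀ s t, R ≤ s → s ≤ t → ψ t ≤ C * ψ s * (t / s) ^ p) (hp : p < 1)
include hR hmeas hpos hup hp

theorem integrableOn_div_sq_of_le_rpow : IntegrableOn (fun t ↦ ψ t / t ^ 2) (Ioi R) := by
  refine ((integrableOn_rpow_div_div_sq hp hR).const_mul (C * ψ R)).mono'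
    (hmeas.div (measurable_id.pow_const 2)).aestronglyMeasurable ?_
  filter_upwards [ae_restrict_mem measurableSet_Ioi] with t ht
  have ht₀ : 0 < t := hR.trans ht
  rw [norm_of_nonneg (div_nonneg (hpos t ht₀).le (sq_nonneg t)), ← mul_div_assoc]
  gcongr
  exact hup R t le_rfl ht.le

theorem integrableOn_min_mul_div_sq_of_le_rpow (r : ℝ) :
    IntegrableOn (fun t ↦ min r t * (ψ t / t ^ 2)) (Ioi R) := by
  refine (integrableOn_div_sq_of_le_rpow hR hmeas hpos hup hp).bdd_mul (c := |r|)
    (by fun_prop) ?_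
  filter_upwards [ae_restrict_mem measurableSet_Ioi] with t ht
  exact abs_le.2 ⟨le_min (neg_abs_le r) (by linarith [abs_nonneg r, hR.trans ht]),
    (min_le_left r t).trans (le_abs_self r)⟩

theorem concaveOn_minKernelIntegral : ConcaveOn ℝ univ (minKernelIntegral ψ R) := by
  refine ConcaveOn.integral convex_univ ?_
    fun r _ ↦ integrableOn_min_mul_div_sq_of_le_rpow hR hmeas hpos hup hp r
  filter_upwards [ae_restrict_mem measurableSet_Ioi] with t ht
  have hc : 0 ≤ ψ t / t ^ 2 := div_nonneg (hpos t (hR.trans ht)).le (sq_nonneg t)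
  exact (((concaveOn_id convex_univ).inf (concaveOn_const t convex_univ)).smul hc).congr
    fun r _ ↦ by simp [mul_comm]

theorem minKernelIntegral_eq {r : ℝ} (hRr : R ≤ r) :
    minKernelIntegral ψ R r = (∫ t in Ioc R r, ψ t / t) + r * ∫ t in Ioi r, ψ t / t ^ 2 := by
  have hint := integrableOn_min_mul_div_sq_of_le_rpow hR hmeas hpos hup hp r
  rw [minKernelIntegral, ← Ioc_union_Ioi_eq_Ioi hRr, setIntegral_union (Ioc_disjoint_Ioi le_rfl)
    measurableSet_Ioi (hint.mono_set Ioc_subset_Ioi_self) (hint.mono_set (Ioi_subset_Ioi hRr)),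
    ← integral_const_mul]
  congr 1
  · refine setIntegral_congr_fun measurableSet_Ioc fun t ht ↦ ?_
    have : t ≠ 0 := (hR.trans ht.1).ne'
    rw [min_eq_right ht.2]
    field_simp
  · exact setIntegral_congr_fun measurableSet_Ioi fun t ht ↦ by rw [min_eq_left ht.le]

theorem minKernelIntegral_le (hC : 0 ≤ C) (hq : 0 < q)
    (hlow : ∀ s t, R ≤ s → s ≤ t → ψ s * (t / s) ^ q ≤ C * ψ t) {r : ℝ} (hRr : R ≤ r) :
    minKernelIntegral ψ R r ≤ C * (1 / q + 1 / (1 - p)) * ψ r := by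
  have hr : 0 < r := hR.trans_le hRr
  have hCψ : 0 ≤ C * ψ r := mul_nonneg hC (hpos r hr).le
  have hhead : ∫ t in Ioc R r, ψ t / t ≤ C * ψ r * (1 / q) := by
    refine (integral_mono_of_nonneg ?_
      ((integrableOn_rpow_div_div (a := q) hR hRr).const_mul (C * ψ r)) ?_).trans ?_
    · filter_upwards [ae_restrict_mem measurableSet_Ioc] with t ht
      exact div_nonneg (hpos t (hR.trans ht.1)).le (hR.trans ht.1).le
    · filter_upwards [ae_restrict_mem measurableSet_Ioc] with t ht
      have ht₀ : 0 < t := hR.trans ht.1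
      have hinv : (r / t) ^ q * (t / r) ^ q = 1 := by
        rw [← mul_rpow (by positivity) (by positivity), div_mul_div_cancel₀ ht₀.ne',
          div_self hr.ne', one_rpow]
      have hψt : ψ t ≤ C * ψ r * (t / r) ^ q :=
        calc ψ t = ψ t * (r / t) ^ q * (t / r) ^ q := by rw [mul_assoc, hinv, mul_one]
          _ ≤ C * ψ r * (t / r) ^ q :=
            mul_le_mul_of_nonneg_right (hlow t r ht.1.le ht.2) (by positivity)
      rw [← mul_div_assoc]
      exact div_le_div_of_nonneg_right hψt ht₀.le
    · rw [integral_const_mul]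
      exact mul_le_mul_of_nonneg_left (integral_rpow_div_div_le hq hR hRr) hCψ
  have htail : r * ∫ t in Ioi r, ψ t / t ^ 2 ≤ C * ψ r * (1 / (1 - p)) := by
    calc r * ∫ t in Ioi r, ψ t / t ^ 2
        ≤ r * ∫ t in Ioi r, C * ψ r * ((t / r) ^ p / t ^ 2) := by
          refine mul_le_mul_of_nonneg_left (setIntegral_mono_on
            ((integrableOn_div_sq_of_le_rpow hR hmeas hpos hup hp).mono_set (Ioi_subset_Ioi hRr))
            ((integrableOn_rpow_div_div_sq hp hr).const_mul _) measurableSet_Ioi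
            fun t ht ↦ ?_) hr.le
          rw [← mul_div_assoc]
          gcongr
          exact hup r t hRr ht.le
      _ = C * ψ r * (r * ∫ t in Ioi r, (t / r) ^ p / t ^ 2) := by
          rw [integral_const_mul]; ring
      _ = C * ψ r * (1 / (1 - p)) := by rw [mul_integral_rpow_div_div_sq hp hr]
  rw [minKernelIntegral_eq hR hmeas hpos hup hp hRr]
  linarith

theorem le_minKernelIntegral (hC : 0 < C) (hq : q < 1)
    (hlow : ∀ s t, R ≤ s → s ≤ t → ψ s * (t / s) ^ q ≤ C * ψ t) {r : ℝ} (hRr : R ≤ r) :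
    ψ r ≤ C * (1 - q) * minKernelIntegral ψ R r := by
  have hr : 0 < r := hR.trans_le hRr
  have hhead : 0 ≤ ∫ t in Ioc R r, ψ t / t := setIntegral_nonneg measurableSet_Ioc
    fun t ht ↦ div_nonneg (hpos t (hR.trans ht.1)).le (hR.trans ht.1).le
  have htail : ψ r / (1 - q) ≤ C * (r * ∫ t in Ioi r, ψ t / t ^ 2) := by
    calc ψ r / (1 - q) = ψ r * (r * ∫ t in Ioi r, (t / r) ^ q / t ^ 2) := by
          rw [mul_integral_rpow_div_div_sq hq hr, mul_one_div]
      _ = r * ∫ t in Ioi r, ψ r * ((t / r) ^ q / t ^ 2) := by rw [integral_const_mul]; ring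
      _ ≤ r * ∫ t in Ioi r, C * (ψ t / t ^ 2) := by
          refine mul_le_mul_of_nonneg_left (setIntegral_mono_on
            ((integrableOn_rpow_div_div_sq hq hr).const_mul _)
            (((integrableOn_div_sq_of_le_rpow hR hmeas hpos hup hp).mono_set
              (Ioi_subset_Ioi hRr)).const_mul C) measurableSet_Ioi fun t ht ↦ ?_) hr.le
          rw [← mul_div_assoc, ← mul_div_assoc]
          exact div_le_div_of_nonneg_right (hlow r t hRr ht.le) (sq_nonneg t)
      _ = C * (r * ∫ t in Ioi r, ψ t / t ^ 2) := by rw [integral_const_mul]; ring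
  rw [div_le_iff₀ (sub_pos.2 hq)] at htail
  rw [minKernelIntegral_eq hR hmeas hpos hup hp hRr]
  nlinarith [mul_nonneg (mul_nonneg hC.le (sub_pos.2 hq).le) hhead]

theorem exists_concaveOn_Ioi_comparable (hC : 0 < C) (hq₀ : 0 < q) (hq₁ : q < 1)
    (hlow : ∀ s t, R ≤ s → s ≤ t → ψ s * (t / s) ^ q ≤ C * ψ t) :
    ∃ ψ₁ : ℝ → ℝ, (∀ r, R < r → 0 < ψ₁ r) ∧ ConcaveOn ℝ (Ioi R) ψ₁ ∧
      ∃ M, 0 < M ∧ ∀ r, R < r → ψ r / ψ₁ r ≤ M ∧ ψ₁ r / ψ r ≤ M := by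
  have h1p : 0 < 1 - p := sub_pos.2 hp
  have hlower (r) (hr : R < r) := le_minKernelIntegral hR hmeas hpos hup hp hC hq₁ hlow hr.le
  have hψ₁ (r) (hr : R < r) : 0 < minKernelIntegral ψ R r :=
    pos_of_mul_pos_right ((hpos r (hR.trans hr)).trans_le (hlower r hr))
      (mul_pos hC (sub_pos.2 hq₁)).le
  refine ⟨minKernelIntegral ψ R, hψ₁,
    (concaveOn_minKernelIntegral hR hmeas hpos hup hp).subset (subset_univ _) (convex_Ioi R),
    max (C * (1 - q)) (C * (1 / q + 1 / (1 - p))),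
    lt_max_of_lt_right (by positivity), fun r hr ↦ ⟨?_, ?_⟩⟩
  · rw [div_le_iff₀ (hψ₁ r hr)]
    exact (hlower r hr).trans (mul_le_mul_of_nonneg_right (le_max_left _ _) (hψ₁ r hr).le)
  · rw [div_le_iff₀ (hpos r (hR.trans hr))]
    exact (minKernelIntegral_le hR hmeas hpos hup hp hC.le hq₀ hlow hr.le).trans
      (mul_le_mul_of_nonneg_right (le_max_right _ _) (hpos r (hR.trans hr)).le)

end MinKernelIntegral

theorem stmt_16_general (θ : ℝ) (hθ : θ ∈ Set.Ioo (0 : ℝ) 1)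
    (ψ : ℝ → ℝ) (hmeas : Measurable ψ) (hpos : ∀ r : ℝ, 0 < r → 0 < ψ r)
    (hreg : ∀ l : ℝ, 0 < l →
      Tendsto (fun r : ℝ => ψ (l * r) / ψ r) atTop (nhds (l ^ θ))) :
    ∃ r₀ : ℝ, 0 < r₀ ∧ ∃ ψ₁ : ℝ → ℝ,
      (∀ r : ℝ, r₀ < r → 0 < ψ₁ r) ∧
      ConcaveOn ℝ (Ioi r₀) ψ₁ ∧
      ∃ M : ℝ, 0 < M ∧ ∀ r : ℝ, r₀ < r →
        ψ r / ψ₁ r ≤ M ∧ ψ₁ r / ψ r ≤ M := by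
  obtain ⟨hθ₀, hθ₁⟩ := hθ
  obtain ⟨ε, hε, hεθ, hεθ'⟩ : ∃ ε : ℝ, 0 < ε ∧ ε < θ ∧ ε < 1 - θ :=
    ⟨min θ (1 - θ) / 2, half_pos (lt_min hθ₀ (sub_pos.2 hθ₁)),
      by linarith [min_le_left θ (1 - θ)], by linarith [min_le_right θ (1 - θ)]⟩
  obtain ⟨R, hR, hPotter⟩ := potter_bounds hmeas hpos hreg hε
  exact ⟨R, hR, exists_concaveOn_Ioi_comparable hR hmeas hpos
    (fun s t hs hst ↦ (hPotter s t hs hst).1) (by linarith) (exp_pos ε) (by linarith)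
    (by linarith) fun s t hs hst ↦ (hPotter s t hs hst).2⟩

/-- A Borel measurable function, regularly varying of index θ ∈ (0,1)
    at infinity and bounded together with its reciprocal on compacts of (0,∞),
    is pseudoconcave near infinity. -/
theorem stmt_16 (θ : ℝ) (hθ : θ ∈ Set.Ioo (0 : ℝ) 1)
    (ψ : ℝ → ℝ) (hmeas : Measurable ψ) (hpos : ∀ r : ℝ, 0 < r → 0 < ψ r)
    (hreg : ∀ l : ℝ, 0 < l →
      Tendsto (fun r : ℝ => ψ (l * r) / ψ r) atTop (nhds (l ^ θ)))
    (hbdd : ∀ a c : ℝ, 0 < a → a < c →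
      ∃ M : ℝ, ∀ r ∈ Icc a c, ψ r ≤ M ∧ (ψ r)⁻¹ ≤ M) :
    ∃ r₀ : ℝ, 0 < r₀ ∧ ∃ ψ₁ : ℝ → ℝ,
      (∀ r : ℝ, r₀ < r → 0 < ψ₁ r) ∧
      ConcaveOn ℝ (Ioi r₀) ψ₁ ∧
      ∃ M : ℝ, 0 < M ∧ ∀ r : ℝ, r₀ < r →
        ψ r / ψ₁ r ≤ M ∧ ψ₁ r / ψ r ≤ M :=
  stmt_16_general θ hθ ψ hmeas hpos hreg
end
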